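/- arXiv:1411.6667 — 3 statements merged into one kernel-verified Lean document; each statement's English description precedes it below -/
import Mathlib

section
/- Let δ, γ ∈ (0,1) with δ + γ < 1, and let k be an integer with k ≥ 2^{2h(δ)/γ}. Then for every positive integer m there exists a code C ⊆ [k]^m with |C| ≥ k^{(1−δ−γ)m} such that every string over [k] of length ⌈(1−δ)m⌉ is a subsequence of at most one codeword of C (equivalently, every two distinct codewords have longest common subsequence of length less than (1−δ)m). (Theorem 2.4 of the paper, general alphabet case.) -/
/-- `s` (of length `ℓ`) is a subsequence of `t` (of length `m`): there are indices
`i₁ < ⋯ < i_ℓ` with `t (i_j) = s j` for all `j`. -/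
def IsSubseq {α : Type*} {ℓ m : ℕ} (s : Fin ℓ → α) (t : Fin m → α) : Prop :=
  ∃ f : Fin ℓ → Fin m, StrictMono f ∧ ∀ j, t (f j) = s j

/-- The binary entropy function `h(x) = x log₂(1/x) + (1-x) log₂(1/(1-x))`. -/
noncomputable def binEnt (x : ℝ) : ℝ :=
  x * Real.logb 2 (1 / x) + (1 - x) * Real.logb 2 (1 / (1 - x))

/-!
Greedy construction: choose codewords one at a time, each time discarding every word that has a
common subsequence of length `ℓ = ⌈(1 - δ) m⌉` with the chosen one. A word has at most
`C(m, ℓ)² k^(m - ℓ)` such neighbours (positions of the subsequence in both words, then the free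
letters of the neighbour), so at least `k^m / (C(m, ℓ)² k^(m - ℓ))` codewords are chosen. The
binomial bound `C(m, ℓ) ≤ δ^(-(m - ℓ)) (1 - δ)^(-ℓ)` together with `k^γ ≥ 2^(2 h(δ))` makes that
denominator at most `k^((δ + γ) m)`.
-/

open Finset

theorem exists_subset_card_le_mul_card_pairwise {α : Type*} [DecidableEq α]
    (r : α → α → Prop) [DecidableRel r] (hsymm : ∀ u v, r u v → r v u) (hrefl : ∀ u, r u u)
    {D : ℕ} (S : Finset α) (hD : ∀ u ∈ S, #{v ∈ S | r u v} ≤ D) :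
    ∃ C ⊆ S, #S ≤ D * #C ∧ (C : Set α).Pairwise fun u v => ¬ r u v := by
  induction S using Finset.strongInduction with
  | _ S ih =>
    obtain rfl | ⟨u, hu⟩ := S.eq_empty_or_nonempty
    · exact ⟨∅, by simp⟩
    set N := {v ∈ S | r u v}
    have hsub : S \ N ⊂ S := sdiff_ssubset (filter_subset _ _) ⟨u, mem_filter.2 ⟨hu, hrefl u⟩⟩
    obtain ⟨C, hCS, hcard, hC⟩ := ih _ hsub fun v hv =>
      (card_le_card (filter_subset_filter _ sdiff_subset)).trans (hD v (sdiff_subset hv))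
    have hfar : ∀ v ∈ C, ¬ r u v := fun v hv huv =>
      (mem_sdiff.1 (hCS hv)).2 (mem_filter.2 ⟨(mem_sdiff.1 (hCS hv)).1, huv⟩)
    have huC : u ∉ C := fun h => hfar u h (hrefl u)
    refine ⟨insert u C, insert_subset hu (hCS.trans sdiff_subset), ?_, ?_⟩
    · calc #S ≤ #(S \ N) + #N := card_le_card_sdiff_add_card
        _ ≤ D * #C + D := add_le_add hcard (hD u hu)
        _ = D * #(insert u C) := by rw [card_insert_of_notMem huC]; ring
    · rw [coe_insert, Set.pairwise_insert]
      exact ⟨hC, fun v hv _ => ⟨hfar v hv, fun hvu => hfar v hv (hsymm v u hvu)⟩⟩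

section Subsequences

variable {α : Type*} {ℓ m n : ℕ}

theorem isSubseq_iff_exists_orderEmbedding {s : Fin ℓ → α} {t : Fin m → α} :
    IsSubseq s t ↔ ∃ f : Fin ℓ ↪o Fin m, t ∘ f = s :=
  ⟨fun ⟨f, hf, hts⟩ => ⟨OrderEmbedding.ofStrictMono f hf, funext hts⟩,
    fun ⟨f, hts⟩ => ⟨f, f.strictMono, congrFun hts⟩⟩

theorem Fin.card_orderEmbedding : Nat.card (Fin ℓ ↪o Fin m) = m.choose ℓ := by
  rw [Nat.card_congr Set.powersetCard.ofFinEmbEquiv, Set.powersetCard.card, Nat.card_fin]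

/-- `HasCommonSubseq ℓ u v` says `LCS(u, v) ≥ ℓ`. -/
def HasCommonSubseq (ℓ : ℕ) (u : Fin m → α) (v : Fin n → α) : Prop :=
  ∃ s : Fin ℓ → α, IsSubseq s u ∧ IsSubseq s v

theorem HasCommonSubseq.symm {u : Fin m → α} {v : Fin n → α} (h : HasCommonSubseq ℓ u v) :
    HasCommonSubseq ℓ v u :=
  let ⟨s, hu, hv⟩ := h; ⟨s, hv, hu⟩

theorem hasCommonSubseq_self (h : ℓ ≤ m) (u : Fin m → α) : HasCommonSubseq ℓ u u :=
  have hs : IsSubseq (u ∘ Fin.castLE h) u := ⟨Fin.castLE h, Fin.strictMono_castLE h, fun _ => rfl⟩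
  ⟨_, hs, hs⟩

variable [Fintype α]

open Classical in
theorem card_filter_isSubseq_le (t : Fin m → α) :
    #{s : Fin ℓ → α | IsSubseq s t} ≤ m.choose ℓ := by
  calc #{s : Fin ℓ → α | IsSubseq s t}
      ≤ #(univ.image fun f : Fin ℓ ↪o Fin m => t ∘ f) := card_le_card fun s hs => by
        obtain ⟨f, rfl⟩ := isSubseq_iff_exists_orderEmbedding.1 (mem_filter.1 hs).2
        exact mem_image_of_mem _ (mem_univ f)
    _ ≤ Fintype.card (Fin ℓ ↪o Fin m) := card_image_le
    _ = m.choose ℓ := by rw [Fintype.card_eq_nat_card, Fin.card_orderEmbedding]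

open Classical in
theorem card_filter_comp_eq_le (f : Fin ℓ ↪o Fin m) (s : Fin ℓ → α) :
    #{t : Fin m → α | t ∘ f = s} ≤ Fintype.card α ^ (m - ℓ) := by
  set A := univ.map f.toEmbedding
  calc #{t : Fin m → α | t ∘ f = s}
      ≤ #(univ : Finset (↥Aᶜ → α)) := card_le_card_of_injOn (fun t i => t i)
        (fun _ _ => mem_univ _) fun t ht t' ht' htt' => funext fun i => by
          by_cases hi : i ∈ A
          · obtain ⟨j, -, rfl⟩ := mem_map.1 hi
            exact (congrFun (mem_filter.1 ht).2 j).trans (congrFun (mem_filter.1 ht').2 j).symm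
          · exact congrFun htt' ⟨i, mem_compl.2 hi⟩
    _ = Fintype.card α ^ (m - ℓ) := by
        rw [card_univ, Fintype.card_fun, Fintype.card_coe, card_compl, card_map, card_univ,
          Fintype.card_fin, Fintype.card_fin]

open Classical in
theorem card_filter_isSubseq_le_choose_mul_pow (s : Fin ℓ → α) :
    #{t : Fin m → α | IsSubseq s t} ≤ m.choose ℓ * Fintype.card α ^ (m - ℓ) := by
  calc #{t : Fin m → α | IsSubseq s t}
      ≤ #(univ.biUnion fun f : Fin ℓ ↪o Fin m => {t : Fin m → α | t ∘ f = s}) :=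
        card_le_card fun t ht => by
          obtain ⟨f, hf⟩ := isSubseq_iff_exists_orderEmbedding.1 (mem_filter.1 ht).2
          exact mem_biUnion.2 ⟨f, mem_univ f, mem_filter.2 ⟨mem_univ t, hf⟩⟩
    _ ≤ Fintype.card (Fin ℓ ↪o Fin m) * Fintype.card α ^ (m - ℓ) :=
        card_biUnion_le_card_mul _ _ _ fun f _ => card_filter_comp_eq_le f s
    _ = m.choose ℓ * Fintype.card α ^ (m - ℓ) := by
        rw [Fintype.card_eq_nat_card, Fin.card_orderEmbedding]

open Classical in
theorem card_filter_hasCommonSubseq_le (u : Fin m → α) :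
    #{v : Fin n → α | HasCommonSubseq ℓ u v} ≤
      m.choose ℓ * (n.choose ℓ * Fintype.card α ^ (n - ℓ)) :=
  calc #{v : Fin n → α | HasCommonSubseq ℓ u v}
      ≤ #(({s : Fin ℓ → α | IsSubseq s u} : Finset _).biUnion
          fun s => {v : Fin n → α | IsSubseq s v}) :=
        card_le_card fun v hv => by
          obtain ⟨s, hsu, hsv⟩ := (mem_filter.1 hv).2
          exact mem_biUnion.2 ⟨s, mem_filter.2 ⟨mem_univ s, hsu⟩, mem_filter.2 ⟨mem_univ v, hsv⟩⟩
    _ ≤ #{s : Fin ℓ → α | IsSubseq s u} * (n.choose ℓ * Fintype.card α ^ (n - ℓ)) :=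
        card_biUnion_le_card_mul _ _ _ fun s _ => card_filter_isSubseq_le_choose_mul_pow s
    _ ≤ m.choose ℓ * (n.choose ℓ * Fintype.card α ^ (n - ℓ)) :=
        Nat.mul_le_mul_right _ (card_filter_isSubseq_le u)

end Subsequences

open Real

theorem binEnt_mul_log_two (x : ℝ) : binEnt x * log 2 = binEntropy x := by
  have : log 2 ≠ 0 := by positivity
  rw [binEnt, binEntropy, logb, logb, one_div, one_div]
  field_simp

theorem choose_mul_pow_mul_pow_le_one {p : ℝ} (hp0 : 0 ≤ p) (hp1 : p ≤ 1) {ℓ m : ℕ}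
    (hℓ : ℓ ≤ m) : (m.choose ℓ : ℝ) * (p ^ ℓ * (1 - p) ^ (m - ℓ)) ≤ 1 := by
  calc (m.choose ℓ : ℝ) * (p ^ ℓ * (1 - p) ^ (m - ℓ))
      ≤ ∑ i ∈ Finset.range (m + 1), p ^ i * (1 - p) ^ (m - i) * m.choose i := by
        rw [mul_comm]
        exact Finset.single_le_sum (f := fun i => p ^ i * (1 - p) ^ (m - i) * (m.choose i : ℝ))
          (fun i _ => by have := sub_nonneg.2 hp1; positivity) (Finset.mem_range.2 (by omega))
    _ = 1 := by rw [← add_pow, add_sub_cancel, one_pow]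

theorem two_mul_binEntropy_le_mul_log {δ γ : ℝ} (hγ : 0 < γ) {k : ℝ}
    (hk : (2 : ℝ) ^ (2 * binEnt δ / γ) ≤ k) : 2 * binEntropy δ ≤ γ * log k := by
  have h := log_le_log (rpow_pos_of_pos two_pos _) hk
  rw [log_rpow two_pos, div_mul_eq_mul_div, mul_assoc, binEnt_mul_log_two,
    div_le_iff₀ hγ] at h
  linarith

theorem two_mul_log_choose_add_le {δ γ L : ℝ} (hδ0 : 0 < δ) (hδ1 : δ < 1) (hγ0 : 0 < γ)
    (hδγ : δ + γ ≤ 1) (hL : 2 * binEntropy δ ≤ γ * L) {ℓ m : ℕ} (hℓ : (1 - δ) * m ≤ ℓ)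
    (hℓm : ℓ ≤ m) :
    2 * log (m.choose ℓ) + (m - ℓ : ℕ) * L ≤ (δ + γ) * m * L := by
  set a := log δ
  set b := log (1 - δ)
  have ha : a ≤ 0 := log_nonpos hδ0.le hδ1.le
  have hent : binEntropy δ = -(δ * a) - (1 - δ) * b := by
    rw [binEntropy, log_inv, log_inv]; ring
  have hL0 : 0 ≤ L := by
    have := binEntropy_pos hδ0 hδ1
    nlinarith
  -- each unit by which `ℓ` exceeds `(1 - δ) m` costs at most `2 (a - b)` and saves `L`
  have hab : 2 * (a - b) ≤ L := by
    rcases le_or_gt a b with h | h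
    · linarith
    · have : γ * (2 * (a - b)) ≤ γ * L := by
        nlinarith [mul_le_mul_of_nonneg_right (show γ ≤ 1 - δ by linarith) (sub_nonneg.2 h.le)]
      exact le_of_mul_le_mul_left this hγ0
  have hchoose : log (m.choose ℓ) + (m - ℓ : ℕ) * a + ℓ * b ≤ 0 := by
    have hδ' : 0 < 1 - δ := sub_pos.2 hδ1
    have hpos : (0 : ℝ) < m.choose ℓ := by exact_mod_cast Nat.choose_pos hℓm
    have h := choose_mul_pow_mul_pow_le_one hδ'.le (sub_le_self 1 hδ0.le) hℓm
    rw [sub_sub_cancel] at h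
    have h' := log_le_log (mul_pos hpos (mul_pos (pow_pos hδ' _) (pow_pos hδ0 _))) h
    rw [log_one, log_mul hpos.ne' (mul_pos (pow_pos hδ' _) (pow_pos hδ0 _)).ne',
      log_mul (pow_pos hδ' _).ne' (pow_pos hδ0 _).ne', log_pow, log_pow] at h'
    linarith
  set φ : ℝ := ℓ - (1 - δ) * m
  have hφ : 0 ≤ φ := sub_nonneg.2 hℓ
  have hmℓ : ((m - ℓ : ℕ) : ℝ) = δ * m - φ := by push_cast [hℓm]; ring
  have hℓφ : (ℓ : ℝ) = (1 - δ) * m + φ := by ring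
  rw [hmℓ, hℓφ] at hchoose
  rw [hmℓ]
  nlinarith [mul_le_mul_of_nonneg_left hab hφ, mul_le_mul_of_nonneg_left hL (Nat.cast_nonneg m)]

theorem choose_sq_mul_pow_le_rpow {δ γ k : ℝ} (hδ0 : 0 < δ) (hδ1 : δ < 1) (hγ0 : 0 < γ)
    (hδγ : δ + γ ≤ 1) (hk : (2 : ℝ) ^ (2 * binEnt δ / γ) ≤ k) {ℓ m : ℕ}
    (hℓ : (1 - δ) * m ≤ ℓ) (hℓm : ℓ ≤ m) :
    (m.choose ℓ : ℝ) ^ 2 * k ^ (m - ℓ) ≤ k ^ ((δ + γ) * m) := by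
  have hk0 : 0 < k := (rpow_pos_of_pos two_pos _).trans_le hk
  have hpos : (0 : ℝ) < m.choose ℓ := by exact_mod_cast Nat.choose_pos hℓm
  rw [← log_le_log_iff (by positivity) (rpow_pos_of_pos hk0 _), log_mul (by positivity)
    (by positivity), log_pow, log_pow, log_rpow hk0]
  have := two_mul_log_choose_add_le hδ0 hδ1 hγ0 hδγ
    (two_mul_binEntropy_le_mul_log hγ0 hk) hℓ hℓm
  push_cast at this ⊢
  linarith

theorem greedy_deletion_codes_general (δ γ : ℝ) (hδ0 : 0 < δ) (hδ1 : δ < 1) (hγ0 : 0 < γ)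
    (hδγ : δ + γ < 1)
    (k : ℕ) (hk : (2 : ℝ) ^ (2 * binEnt δ / γ) ≤ k) (m : ℕ) :
    ∃ C : Finset (Fin m → Fin k),
      (k : ℝ) ^ ((1 - δ - γ) * m) ≤ C.card ∧
      ∀ s : Fin (⌈(1 - δ) * m⌉₊) → Fin k, ∀ u ∈ C, ∀ v ∈ C,
        IsSubseq s u → IsSubseq s v → u = v := by
  classical
  set ℓ := ⌈(1 - δ) * m⌉₊
  have hℓm : ℓ ≤ m := Nat.ceil_le.2 (mul_le_of_le_one_left m.cast_nonneg (by linarith))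
  have hk0 : (0 : ℝ) < k := (rpow_pos_of_pos two_pos _).trans_le hk
  obtain ⟨C, -, hcard, hC⟩ := exists_subset_card_le_mul_card_pairwise (HasCommonSubseq ℓ)
    (fun _ _ => HasCommonSubseq.symm) (hasCommonSubseq_self hℓm) (univ : Finset (Fin m → Fin k))
    fun u _ => card_filter_hasCommonSubseq_le u
  refine ⟨C, ?_, fun s u hu v hv hsu hsv => by_contra fun huv => hC hu hv huv ⟨s, hsu, hsv⟩⟩
  rw [card_univ, Fintype.card_fun, Fintype.card_fin, Fintype.card_fin, ← mul_assoc,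
    ← sq] at hcard
  have hD := choose_sq_mul_pow_le_rpow hδ0 hδ1 hγ0 hδγ.le hk (Nat.le_ceil _) hℓm
  refine le_of_mul_le_mul_left ?_ (rpow_pos_of_pos hk0 ((δ + γ) * m))
  calc (k : ℝ) ^ ((δ + γ) * m) * k ^ ((1 - δ - γ) * m) = k ^ m := by
        rw [← rpow_add hk0, ← rpow_natCast]; ring_nf
    _ ≤ (m.choose ℓ : ℝ) ^ 2 * k ^ (m - ℓ) * #C := by exact_mod_cast hcard
    _ ≤ k ^ ((δ + γ) * m) * #C := by gcongr

/-- Let `δ, γ ∈ (0,1)` with `δ + γ < 1`, and let `k ≥ 2^{2h(δ)/γ}`. Then for every `m ≥ 1`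
there exists a code `C ⊆ [k]^m` with `|C| ≥ k^{(1-δ-γ)m}` such that every string over
`[k]` of length `⌈(1-δ)m⌉` is a subsequence of at most one codeword of `C` (equivalently,
every two distinct codewords have LCS of length less than `(1-δ)m`). -/
theorem greedy_deletion_codes (δ γ : ℝ) (hδ0 : 0 < δ) (hδ1 : δ < 1) (hγ0 : 0 < γ)
    (hγ1 : γ < 1) (hδγ : δ + γ < 1)
    (k : ℕ) (hk : (2 : ℝ) ^ (2 * binEnt δ / γ) ≤ k) (m : ℕ) (hm : 0 < m) :
    ∃ C : Finset (Fin m → Fin k),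
      (k : ℝ) ^ ((1 - δ - γ) * m) ≤ C.card ∧
      ∀ s : Fin (⌈(1 - δ) * m⌉₊) → Fin k, ∀ u ∈ C, ∀ v ∈ C,
        IsSubseq s u → IsSubseq s v → u = v :=
  greedy_deletion_codes_general δ γ hδ0 hδ1 hγ0 hδγ k hk m
end

section
/- There exists an absolute constant c > 0 such that the following holds. Let δ ∈ (0,1/2) and β ∈ (0,1), and let m be a positive integer with δm a positive integer. If 1 − m·2^{−c·βm} > 0, then there exists a code C ⊆ {0,1}^m consisting only of β-dense strings, with |C| ≥ (1 − m·2^{−c·βm})·2^{(1−2h(δ))m}/(2δm), such that every two distinct codewords of C have longest common subsequence of length less than (1−δ)m, i.e., C can be corrected from a δ fraction of worst-case deletions. (Proposition 2.6 of the paper.) -/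
/-- A string `s ∈ {0,1}^m` is `β`-dense if every interval of `⌈βm⌉` consecutive positions
of `s` contains at least `βm/10` ones. -/
def BetaDense (β : ℝ) {m : ℕ} (s : Fin m → Fin 2) : Prop :=
  ∀ start : ℕ, start + ⌈β * m⌉₊ ≤ m →
    β * m / 10 ≤
      ({j : Fin m | start ≤ (j : ℕ) ∧ (j : ℕ) < start + ⌈β * m⌉₊ ∧ s j = 1}.ncard : ℝ)

open Finset
open scoped Classical

theorem Finset.exists_subset_pairwise_not_rel {V : Type*} [DecidableEq V] {R : V → V → Prop}
    [DecidableRel R] (hrefl : ∀ u, R u u) (hsymm : ∀ u v, R u v → R v u) {B : ℝ} (D : Finset V)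
    (hB : ∀ u ∈ D, (#{v ∈ D | R u v} : ℝ) ≤ B) :
    ∃ C ⊆ D, (#D : ℝ) ≤ B * #C ∧ (C : Set V).Pairwise fun u v ↦ ¬ R u v := by
  induction D using Finset.strongInduction with
  | H D ih =>
  obtain rfl | ⟨u, hu⟩ := D.eq_empty_or_nonempty
  · exact ⟨∅, by simp⟩
  set D' := {v ∈ D | ¬ R u v}
  have hD' : D' ⊂ D := filter_ssubset.2 ⟨u, hu, not_not.2 (hrefl u)⟩
  obtain ⟨C, hCD', hC, hCR⟩ := ih D' hD' fun v hv ↦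
    (Nat.cast_le.2 (card_le_card (filter_subset_filter _ (filter_subset _ _)))).trans
      (hB v (mem_of_mem_filter v hv))
  have huC : u ∉ C := fun h ↦ (mem_filter.1 (hCD' h)).2 (hrefl u)
  refine ⟨insert u C, insert_subset hu (hCD'.trans (filter_subset _ _)), ?_, ?_⟩
  · have hsplit : #D = #{v ∈ D | R u v} + #D' := (card_filter_add_card_filter_not _).symm
    rw [card_insert_of_notMem huC, hsplit]
    push_cast
    linarith [hB u hu]
  · rw [coe_insert]
    refine hCR.insert fun v hv _ ↦ ?_
    have hnR := (mem_filter.1 (hCD' hv)).2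
    exact ⟨hnR, fun h ↦ hnR (hsymm v u h)⟩

theorem isSubseq_comp_castLE {α : Type*} {n m : ℕ} (h : n ≤ m) (t : Fin m → α) :
    IsSubseq (t ∘ Fin.castLE h) t :=
  ⟨Fin.castLE h, Fin.strictMono_castLE h, fun _ ↦ rfl⟩

theorem IsSubseq.sublist_ofFn {α : Type*} {ℓ m : ℕ} {s : Fin ℓ → α} {t : Fin m → α}
    (h : IsSubseq s t) : (List.ofFn s).Sublist (List.ofFn t) := by
  obtain ⟨f, hf, hft⟩ := h
  rw [List.sublist_iff_exists_fin_orderEmbedding_get_eq]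
  refine ⟨OrderEmbedding.ofStrictMono
    (Fin.cast List.length_ofFn.symm ∘ f ∘ Fin.cast List.length_ofFn) fun i j hij ↦ hf hij,
    fun i ↦ ?_⟩
  simp [OrderEmbedding.ofStrictMono, ← hft]
  rfl

theorem card_isSubseq_le_choose {α : Type*} [Fintype α] {m : ℕ} (ℓ : ℕ) (t : Fin m → α) :
    #{s : Fin ℓ → α | IsSubseq s t} ≤ m.choose ℓ :=
  calc #{s : Fin ℓ → α | IsSubseq s t}
      ≤ (List.sublistsLen ℓ (List.ofFn t)).toFinset.card :=
        card_le_card_of_injOn List.ofFn (fun s hs ↦ by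
          simpa using (mem_filter.1 hs).2.sublist_ofFn) List.ofFn_injective.injOn
    _ ≤ m.choose ℓ := by simpa using List.toFinset_card_le (List.sublistsLen ℓ (List.ofFn t))

theorem Nat.sum_range_choose_succ (m k : ℕ) :
    ∑ i ∈ range k, (m + 1).choose i
      = ∑ i ∈ range k, m.choose i + ∑ i ∈ range (k - 1), m.choose i := by
  cases k with
  | zero => simp
  | succ k =>
    rw [sum_range_succ', sum_range_succ' (fun i ↦ m.choose i)]
    simp only [Nat.choose_succ_succ, sum_add_distrib, Nat.choose_zero_right, Nat.add_sub_cancel]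
    ring

/-- A supersequence of `a :: s` either starts with `a`, and its tail is a supersequence of `s`,
or starts with the other bit, and its tail is a supersequence of `a :: s`; this matches Pascal's
rule for the bound. -/
theorem card_sublist_ofFn_le (m : ℕ) (s : List (Fin 2)) :
    #{t : Fin m → Fin 2 | s.Sublist (List.ofFn t)}
      ≤ ∑ i ∈ range (m + 1 - s.length), m.choose i := by
  induction m generalizing s with
  | zero => cases s <;> simp
  | succ m ih =>
    cases s with
    | nil => exact (card_le_univ _).trans (by simp [Nat.sum_range_choose])
    | cons a s =>
      have hofFn (t : Fin (m + 1) → Fin 2) : List.ofFn t = t 0 :: List.ofFn (Fin.tail t) :=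
        List.ofFn_succ
      have htail {t₁ t₂ : Fin (m + 1) → Fin 2} (h₀ : t₁ 0 = t₂ 0)
          (h : Fin.tail t₁ = Fin.tail t₂) : t₁ = t₂ := by
        rw [← Fin.cons_self_tail t₁, ← Fin.cons_self_tail t₂, h₀, h]
      have head_eq : #{t : Fin (m + 1) → Fin 2 | (a :: s).Sublist (List.ofFn t) ∧ t 0 = a}
          ≤ #{g : Fin m → Fin 2 | s.Sublist (List.ofFn g)} :=
        card_le_card_of_injOn Fin.tail
          (fun t ht ↦ by
            obtain ⟨hs, ha⟩ := (mem_filter.1 ht).2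
            rw [hofFn, ha, List.cons_sublist_cons] at hs
            simpa using hs)
          (fun t₁ h₁ t₂ h₂ h ↦ htail (by rw [(mem_filter.1 h₁).2.2, (mem_filter.1 h₂).2.2]) h)
      have head_ne : #{t : Fin (m + 1) → Fin 2 | (a :: s).Sublist (List.ofFn t) ∧ t 0 ≠ a}
          ≤ #{g : Fin m → Fin 2 | (a :: s).Sublist (List.ofFn g)} :=
        card_le_card_of_injOn Fin.tail
          (fun t ht ↦ by
            obtain ⟨hs, ha⟩ := (mem_filter.1 ht).2
            rw [hofFn] at hs
            simpa using hs.of_cons_of_ne (Ne.symm ha))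
          (fun t₁ h₁ t₂ h₂ h ↦ htail (by
            have := (mem_filter.1 h₁).2.2; have := (mem_filter.1 h₂).2.2; omega) h)
      calc #{t : Fin (m + 1) → Fin 2 | (a :: s).Sublist (List.ofFn t)}
          = #{t : Fin (m + 1) → Fin 2 | (a :: s).Sublist (List.ofFn t) ∧ t 0 = a}
            + #{t : Fin (m + 1) → Fin 2 | (a :: s).Sublist (List.ofFn t) ∧ t 0 ≠ a} := by
            rw [← card_filter_add_card_filter_not (p := fun t ↦ t 0 = a), filter_filter,
              filter_filter]
        _ ≤ ∑ i ∈ range (m + 1 - s.length), m.choose i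
            + ∑ i ∈ range (m + 1 - (s.length + 1)), m.choose i :=
            add_le_add (head_eq.trans (ih s)) (head_ne.trans (ih (a :: s)))
        _ = _ := by
            rw [List.length_cons, Nat.sum_range_choose_succ,
              show m + 1 + 1 - (s.length + 1) = m + 1 - s.length by omega,
              show m + 1 - s.length - 1 = m + 1 - (s.length + 1) by omega]

theorem card_commonSubseq_le {m : ℕ} (n : ℕ) (u : Fin m → Fin 2) :
    #{v : Fin m → Fin 2 | ∃ s : Fin n → Fin 2, IsSubseq s u ∧ IsSubseq s v}
      ≤ m.choose n * ∑ i ∈ range (m + 1 - n), m.choose i := by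
  have hcover : ({v : Fin m → Fin 2 | ∃ s : Fin n → Fin 2, IsSubseq s u ∧ IsSubseq s v} : Finset _)
      ⊆ ({s : Fin n → Fin 2 | IsSubseq s u} : Finset _).biUnion
          fun s ↦ ({v | IsSubseq s v} : Finset _) := by
    intro v hv
    obtain ⟨s, hsu, hsv⟩ := (mem_filter.1 hv).2
    exact mem_biUnion.2 ⟨s, mem_filter.2 ⟨mem_univ _, hsu⟩, mem_filter.2 ⟨mem_univ _, hsv⟩⟩
  have hsuper (s : Fin n → Fin 2) :
      #{v : Fin m → Fin 2 | IsSubseq s v} ≤ ∑ i ∈ range (m + 1 - n), m.choose i :=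
    calc #{v : Fin m → Fin 2 | IsSubseq s v}
        ≤ #{v : Fin m → Fin 2 | (List.ofFn s).Sublist (List.ofFn v)} :=
          card_le_card (monotone_filter_right _ fun _ _ ↦ IsSubseq.sublist_ofFn)
      _ ≤ _ := by simpa using card_sublist_ofFn_le m (List.ofFn s)
  calc _ ≤ _ := card_le_card hcover
    _ ≤ _ := card_biUnion_le_card_mul _ _ _ fun s _ ↦ hsuper s
    _ ≤ _ := Nat.mul_le_mul_right _ (card_isSubseq_le_choose n u)

theorem sum_range_choose_mul_pow_le_one {δ : ℝ} (h0 : 0 ≤ δ) (hδ : δ ≤ 1 / 2) {d m : ℕ}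
    (hdm : d ≤ m) :
    (∑ i ∈ range (d + 1), (m.choose i : ℝ)) * (δ ^ d * (1 - δ) ^ (m - d)) ≤ 1 := by
  have h1δ : 0 ≤ 1 - δ := by linarith
  have hterm {i : ℕ} (hid : i ≤ d) :
      δ ^ d * (1 - δ) ^ (m - d) ≤ δ ^ i * (1 - δ) ^ (m - i) :=
    calc δ ^ d * (1 - δ) ^ (m - d) = δ ^ i * δ ^ (d - i) * (1 - δ) ^ (m - d) := by
          rw [← pow_add, Nat.add_sub_cancel' hid]
      _ ≤ δ ^ i * (1 - δ) ^ (d - i) * (1 - δ) ^ (m - d) :=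
          mul_le_mul_of_nonneg_right (mul_le_mul_of_nonneg_left
            (pow_le_pow_left₀ h0 (by linarith) _) (by positivity)) (pow_nonneg h1δ _)
      _ = δ ^ i * (1 - δ) ^ (m - i) := by
          rw [mul_assoc, ← pow_add, add_comm, Nat.sub_add_sub_cancel hdm hid]
  calc (∑ i ∈ range (d + 1), (m.choose i : ℝ)) * (δ ^ d * (1 - δ) ^ (m - d))
      ≤ ∑ i ∈ range (d + 1), δ ^ i * (1 - δ) ^ (m - i) * m.choose i := by
        rw [sum_mul]
        refine sum_le_sum fun i hi ↦ ?_
        rw [mul_comm]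
        exact mul_le_mul_of_nonneg_right (hterm (Nat.lt_succ_iff.1 (mem_range.1 hi)))
          (Nat.cast_nonneg _)
    _ ≤ ∑ i ∈ range (m + 1), δ ^ i * (1 - δ) ^ (m - i) * m.choose i :=
        sum_le_sum_of_subset_of_nonneg (range_subset_range.2 (by omega)) fun i _ _ ↦ by
          positivity
    _ = 1 := by rw [← add_pow, add_sub_cancel, one_pow]

theorem two_rpow_binEnt_mul {δ : ℝ} (h0 : 0 < δ) (h1 : δ < 1) {d m : ℕ} (hdm : d ≤ m)
    (hd : (d : ℝ) = δ * m) : (2 : ℝ) ^ (binEnt δ * m) * (δ ^ d * (1 - δ) ^ (m - d)) = 1 := by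
  have h1δ : 0 < 1 - δ := by linarith
  have hexp : binEnt δ * m
      = d * Real.logb 2 (1 / δ) + ((m - d : ℕ) : ℝ) * Real.logb 2 (1 / (1 - δ)) := by
    rw [binEnt, Nat.cast_sub hdm, hd]
    ring
  have hpow {a : ℝ} (ha : 0 < a) (k : ℕ) : (2 : ℝ) ^ (k * Real.logb 2 (1 / a)) = (1 / a) ^ k := by
    rw [mul_comm, Real.rpow_mul zero_le_two, Real.rpow_logb two_pos (by norm_num) (by positivity),
      Real.rpow_natCast]
  rw [hexp, Real.rpow_add two_pos, hpow h0, hpow h1δ, mul_mul_mul_comm, ← mul_pow, ← mul_pow,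
    one_div_mul_cancel h0.ne', one_div_mul_cancel h1δ.ne', one_pow, one_pow, one_mul]

theorem sum_range_choose_le_two_rpow_binEnt {δ : ℝ} (h0 : 0 < δ) (hδ : δ ≤ 1 / 2) {d m : ℕ}
    (hdm : d ≤ m) (hd : (d : ℝ) = δ * m) :
    ∑ i ∈ range (d + 1), (m.choose i : ℝ) ≤ 2 ^ (binEnt δ * m) := by
  have hpos : 0 < δ ^ d * (1 - δ) ^ (m - d) := by
    have : 0 < 1 - δ := by linarith
    positivity
  refine le_of_mul_le_mul_right ?_ hpos
  rw [two_rpow_binEnt_mul h0 (by linarith) hdm hd]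
  exact sum_range_choose_mul_pow_le_one h0.le hδ hdm

theorem card_commonSubseq_le_two_rpow {δ : ℝ} (h0 : 0 < δ) (hδ : δ ≤ 1 / 2) {d m : ℕ}
    (hdm : d ≤ m) (hd : (d : ℝ) = δ * m) (u : Fin m → Fin 2) :
    (#{v : Fin m → Fin 2 | ∃ s : Fin (m - d) → Fin 2, IsSubseq s u ∧ IsSubseq s v} : ℝ)
      ≤ ((2 : ℝ) ^ (binEnt δ * m)) ^ 2 := by
  have hsum := sum_range_choose_le_two_rpow_binEnt h0 hδ hdm hd
  have hchoose : (m.choose d : ℝ) ≤ ∑ i ∈ range (d + 1), (m.choose i : ℝ) :=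
    single_le_sum (fun i _ ↦ Nat.cast_nonneg _) (self_mem_range_succ d)
  have hcount := card_commonSubseq_le (m - d) u
  rw [Nat.choose_symm hdm, show m + 1 - (m - d) = d + 1 by omega] at hcount
  calc _ ≤ (m.choose d : ℝ) * ∑ i ∈ range (d + 1), (m.choose i : ℝ) := by exact_mod_cast hcount
    _ ≤ _ := by rw [sq]; exact mul_le_mul (hchoose.trans hsum) hsum (by positivity) (by positivity)

theorem sum_pow_card_filter_eq {ι R : Type*} [Fintype ι] [DecidableEq ι] [CommSemiring R]
    (W : Finset ι) (t : R) :
    ∑ s : ι → Fin 2, t ^ #{j ∈ W | s j = 1} = (1 + t) ^ #W * 2 ^ #Wᶜ := by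
  set f : ι → Fin 2 → R := fun j b ↦ if j ∈ W ∧ b = 1 then t else 1
  have hprod (s : ι → Fin 2) : t ^ #{j ∈ W | s j = 1} = ∏ j, f j (s j) := by
    rw [prod_ite, prod_const, prod_const_one, mul_one, ← filter_filter, filter_mem_eq_inter,
      univ_inter]
  have hsum (j : ι) : ∑ b, f j b = if j ∈ W then 1 + t else 2 := by
    by_cases hj : j ∈ W <;> simp [f, hj, Fin.sum_univ_two]
  rw [sum_congr rfl fun s _ ↦ hprod s, ← Fintype.prod_sum f, Fintype.prod_congr _ _ hsum,
    prod_ite, prod_const, prod_const, filter_mem_eq_inter, univ_inter, filter_not,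
    filter_mem_eq_inter, univ_inter, compl_eq_univ_sdiff]

theorem card_filter_card_le_mul_rpow_le {ι : Type*} [Fintype ι] [DecidableEq ι] (W : Finset ι)
    {t : ℝ} (ht0 : 0 < t) (ht1 : t ≤ 1) (x : ℝ) :
    #{s : ι → Fin 2 | (#{j ∈ W | s j = 1} : ℝ) ≤ x} * t ^ x ≤ (1 + t) ^ #W * 2 ^ #Wᶜ := by
  rw [← sum_pow_card_filter_eq, ← nsmul_eq_mul, ← sum_const]
  calc ∑ _s ∈ {s : ι → Fin 2 | (#{j ∈ W | s j = 1} : ℝ) ≤ x}, t ^ x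
      ≤ ∑ s ∈ {s : ι → Fin 2 | (#{j ∈ W | s j = 1} : ℝ) ≤ x}, t ^ #{j ∈ W | s j = 1} :=
        sum_le_sum fun s hs ↦ by
          rw [← Real.rpow_natCast]
          exact Real.rpow_le_rpow_of_exponent_ge ht0 ht1 (mem_filter.1 hs).2
    _ ≤ ∑ s : ι → Fin 2, t ^ #{j ∈ W | s j = 1} :=
        sum_le_sum_of_subset_of_nonneg (subset_univ _) fun _ _ _ ↦ by positivity

def window (m start L : ℕ) : Finset (Fin m) := {j | start ≤ (j : ℕ) ∧ (j : ℕ) < start + L}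

theorem card_window {m start L : ℕ} (h : start + L ≤ m) : #(window m start L) = L := by
  have : window m start L = (Ico start (start + L)).attachFin
      fun k hk ↦ by rw [mem_Ico] at hk; omega := by
    ext j
    simp [window]
  rw [this, card_attachFin, Nat.card_Ico, Nat.add_sub_cancel_left]

theorem nine_div_eight_le_two_rpow : (9 / 8 : ℝ) ≤ 2 ^ (1 / 5 : ℝ) := by
  refine le_of_pow_le_pow_left₀ (n := 5) (by norm_num) (by positivity) ?_
  rw [← Real.rpow_natCast (2 ^ _), ← Real.rpow_mul zero_le_two]
  norm_num

/-- The exponential moment with weight `1/8`: each position of the window contributes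
`(1 + 1/8)/2 ≤ 2^{-4/5}` and a sparse window costs a factor `8^{y/10} = 2^{3y/10}`. -/
theorem card_sparse_window_le {m start L : ℕ} (h : start + L ≤ m) {y : ℝ} (hyL : y ≤ L) :
    (#{s : Fin m → Fin 2 | (#{j ∈ window m start L | s j = 1} : ℝ) ≤ y / 10} : ℝ)
      ≤ 2 ^ ((m : ℝ) - y / 2) := by
  have hmarkov := card_filter_card_le_mul_rpow_le (window m start L) (t := 1 / 8) (by norm_num)
    (by norm_num) (y / 10)
  rw [card_compl, card_window h, Fintype.card_fin] at hmarkov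
  have h8 : ((1 : ℝ) / 8) ^ (y / 10) = 2 ^ (-(3 * y / 10)) := by
    rw [show (1 : ℝ) / 8 = 2 ^ (-3 : ℝ) by norm_num, ← Real.rpow_mul zero_le_two]
    ring_nf
  have hbound : (1 + 1 / 8 : ℝ) ^ L * 2 ^ (m - L) ≤ 2 ^ ((m : ℝ) - 4 * y / 5) :=
    calc (1 + 1 / 8 : ℝ) ^ L * 2 ^ (m - L) ≤ ((2 : ℝ) ^ (1 / 5 : ℝ)) ^ L * 2 ^ (m - L) := by
          gcongr
          norm_num [nine_div_eight_le_two_rpow]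
      _ = 2 ^ ((m : ℝ) - 4 * L / 5) := by
          rw [← Real.rpow_natCast, ← Real.rpow_mul zero_le_two, ← Real.rpow_natCast,
            ← Real.rpow_add two_pos, Nat.cast_sub (by omega)]
          ring_nf
      _ ≤ 2 ^ ((m : ℝ) - 4 * y / 5) := Real.rpow_le_rpow_of_exponent_le one_le_two (by linarith)
  rw [h8] at hmarkov
  have := hmarkov.trans hbound
  rw [← le_div_iff₀ (by positivity), ← Real.rpow_sub two_pos] at this
  exact this.trans_eq (by ring_nf)

theorem ncard_window_ones {m start L : ℕ} (s : Fin m → Fin 2) :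
    {j : Fin m | start ≤ (j : ℕ) ∧ (j : ℕ) < start + L ∧ s j = 1}.ncard
      = #{j ∈ window m start L | s j = 1} := by
  rw [← Set.ncard_coe_finset]
  congr 1
  ext j
  simp [window, and_assoc]

theorem card_betaDense_ge {β : ℝ} (hβ : 0 < β) {m : ℕ} (hm : 0 < m) :
    (1 - m * (2 : ℝ) ^ (-(1 / 2 * β * m))) * 2 ^ m ≤ #{s : Fin m → Fin 2 | BetaDense β s} := by
  set L := ⌈β * m⌉₊
  have hL : 0 < L := Nat.ceil_pos.2 (by positivity)
  set starts := {start ∈ range m | start + L ≤ m}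
  set sparse := fun start ↦
    ({s : Fin m → Fin 2 | (#{j ∈ window m start L | s j = 1} : ℝ) ≤ β * m / 10} : Finset _)
  have hcover : ({s : Fin m → Fin 2 | ¬ BetaDense β s} : Finset _) ⊆ starts.biUnion sparse := by
    intro s hs
    simp only [mem_filter, mem_univ, true_and, BetaDense, not_forall, not_le] at hs
    obtain ⟨start, hstart, hlt⟩ := hs
    rw [ncard_window_ones] at hlt
    exact mem_biUnion.2
      ⟨start, mem_filter.2 ⟨mem_range.2 (by omega), hstart⟩, mem_filter.2 ⟨mem_univ _, hlt.le⟩⟩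
  have hbad : (#{s : Fin m → Fin 2 | ¬ BetaDense β s} : ℝ) ≤ m * 2 ^ ((m : ℝ) - β * m / 2) :=
    calc _ ≤ (#(starts.biUnion sparse) : ℝ) := by exact_mod_cast card_le_card hcover
      _ ≤ ∑ start ∈ starts, (#(sparse start) : ℝ) := by exact_mod_cast card_biUnion_le
      _ ≤ ∑ _start ∈ starts, (2 : ℝ) ^ ((m : ℝ) - β * m / 2) :=
          sum_le_sum fun start hstart ↦
            card_sparse_window_le (mem_filter.1 hstart).2 (Nat.le_ceil _)
      _ ≤ _ := by
          rw [sum_const, nsmul_eq_mul]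
          gcongr
          exact_mod_cast (card_filter_le _ _).trans (card_range m).le
  have hsplit : (#{s : Fin m → Fin 2 | BetaDense β s} : ℝ)
      + #{s : Fin m → Fin 2 | ¬ BetaDense β s} = 2 ^ m := by
    rw [← Nat.cast_add, card_filter_add_card_filter_not, card_univ, Fintype.card_fun,
      Fintype.card_fin, Fintype.card_fin]
    push_cast
    rfl
  have hexp : (2 : ℝ) ^ ((m : ℝ) - β * m / 2) = 2 ^ (-(1 / 2 * β * m)) * 2 ^ m := by
    rw [← Real.rpow_natCast, ← Real.rpow_add two_pos]
    ring_nf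
  rw [hexp] at hbad
  linarith

theorem exists_betaDense_code {δ β : ℝ} (hδ0 : 0 < δ) (hδ : δ ≤ 1 / 2) (hβ : 0 < β) {m d : ℕ}
    (hm : 0 < m) (hdm : d ≤ m) (hd : (d : ℝ) = δ * m) :
    ∃ C : Finset (Fin m → Fin 2), (∀ u ∈ C, BetaDense β u) ∧
      (1 - m * (2 : ℝ) ^ (-(1 / 2 * β * m))) * 2 ^ ((1 - 2 * binEnt δ) * m) ≤ #C ∧
      (C : Set (Fin m → Fin 2)).Pairwise
        fun u v ↦ ¬∃ s : Fin (m - d) → Fin 2, IsSubseq s u ∧ IsSubseq s v := by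
  set Q := (2 : ℝ) ^ (binEnt δ * m)
  obtain ⟨C, hCD, hDC, hC⟩ := exists_subset_pairwise_not_rel
    (R := fun u v ↦ ∃ s : Fin (m - d) → Fin 2, IsSubseq s u ∧ IsSubseq s v)
    (fun u ↦ ⟨_, isSubseq_comp_castLE (Nat.sub_le m d) u, isSubseq_comp_castLE _ u⟩)
    (fun u v ⟨s, hu, hv⟩ ↦ ⟨s, hv, hu⟩) {s | BetaDense β s} fun u _ ↦
      (Nat.cast_le.2 (card_le_card (filter_subset_filter _ (filter_subset _ _)))).trans
        (card_commonSubseq_le_two_rpow hδ0 hδ hdm hd u)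
  refine ⟨C, fun u hu ↦ (mem_filter.1 (hCD hu)).2, ?_, hC⟩
  have hQ : (2 : ℝ) ^ ((1 - 2 * binEnt δ) * m) = 2 ^ m / Q ^ 2 := by
    rw [eq_div_iff (by positivity), sq, ← Real.rpow_add two_pos, ← Real.rpow_add two_pos,
      ← Real.rpow_natCast]
    ring_nf
  calc _ ≤ #{s : Fin m → Fin 2 | BetaDense β s} / Q ^ 2 := by
        rw [hQ, ← mul_div_assoc]
        gcongr
        exact card_betaDense_ge hβ hm
    _ ≤ #C := div_le_of_le_mul₀ (by positivity) (Nat.cast_nonneg _) (hDC.trans_eq (mul_comm _ _))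

/-- There is an absolute constant `c > 0` such that: for `δ ∈ (0,1/2)`, `β ∈ (0,1)`, and
`m ≥ 1` with `δm` a positive integer, if `1 - m·2^{-cβm} > 0` then there is a code
`C ⊆ {0,1}^m` consisting only of `β`-dense strings, with
`|C| ≥ (1 - m·2^{-cβm})·2^{(1-2h(δ))m}/(2δm)`, in which every two distinct codewords have
longest common subsequence of length less than `(1-δ)m` (no string of length `⌈(1-δ)m⌉`
is a common subsequence of two distinct codewords). -/
theorem greedy_dense_binary_deletion_codes :
    ∃ c : ℝ, 0 < c ∧
      ∀ δ β : ℝ, 0 < δ → δ < 1 / 2 → 0 < β → β < 1 →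
      ∀ m d : ℕ, 0 < m → 0 < d → (d : ℝ) = δ * m →
      0 < 1 - m * (2 : ℝ) ^ (-(c * β * m)) →
      ∃ C : Finset (Fin m → Fin 2),
        (∀ u ∈ C, BetaDense β u) ∧
        (1 - m * (2 : ℝ) ^ (-(c * β * m))) *
            ((2 : ℝ) ^ ((1 - 2 * binEnt δ) * m) / (2 * δ * m)) ≤ C.card ∧
        ∀ u ∈ C, ∀ v ∈ C, u ≠ v →
          ¬∃ s : Fin (⌈(1 - δ) * m⌉₊) → Fin 2, IsSubseq s u ∧ IsSubseq s v := by
  refine ⟨1 / 2, by norm_num, fun δ β hδ0 hδ hβ _ m d hm hd0 hd hpos ↦ ?_⟩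
  have hdm : d ≤ m := by
    have : (d : ℝ) ≤ m := by rw [hd]; nlinarith [(Nat.cast_pos.2 hm : (0 : ℝ) < m)]
    exact_mod_cast this
  have hceil : ⌈(1 - δ) * m⌉₊ = m - d := by
    rw [sub_mul, one_mul, ← hd, ← Nat.cast_sub hdm, Nat.ceil_natCast]
  obtain ⟨C, hdense, hcard, hC⟩ := exists_betaDense_code hδ0 hδ.le hβ hm hdm hd
  refine ⟨C, hdense, ?_, fun u hu v hv ↦ hceil ▸ hC hu hv⟩
  have h2δm : 1 ≤ 2 * δ * m := by
    rw [mul_assoc, ← hd]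
    have : (1 : ℝ) ≤ d := by exact_mod_cast hd0
    linarith
  calc _ ≤ (1 - m * (2 : ℝ) ^ (-(1 / 2 * β * m))) * 2 ^ ((1 - 2 * binEnt δ) * m) :=
        mul_le_mul_of_nonneg_left (div_le_self (by positivity) h2δm) hpos.le
    _ ≤ C.card := hcard
end

section
/- Let k ≥ 2 and let ℓ, m be positive integers with ℓ ≤ m, and fix a string s ∈ [k]^ℓ. The number of strings s' ∈ [k]^m that contain s as a subsequence is at most Σ_{t=ℓ}^{m} C(t−1, ℓ−1)·k^{m−t}·(k−1)^{t−ℓ}, and this sum is at most k^{m−ℓ}·C(m, ℓ), where C(a,b) denotes the binomial coefficient. (Lemma 2.3 of the paper, general alphabet bound.) -/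
open Finset

open List in
theorem isSubseq_iff_sublist {α : Type*} {ℓ m : ℕ} {s : Fin ℓ → α} {t : Fin m → α} :
    IsSubseq s t ↔ ofFn s <+ ofFn t := by
  rw [List.sublist_iff_exists_fin_orderEmbedding_get_eq]
  constructor
  · rintro ⟨f, hf, hft⟩
    refine ⟨(Fin.castOrderIso length_ofFn).toOrderEmbedding.trans
      ((OrderEmbedding.ofStrictMono f hf).trans
        (Fin.castOrderIso length_ofFn.symm).toOrderEmbedding), fun i => ?_⟩
    simp [hft, Fin.cast]
  · rintro ⟨f, hf⟩
    refine ⟨fun j => Fin.cast length_ofFn (f (Fin.cast length_ofFn.symm j)),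
      fun i j hij => f.strictMono hij, fun j => ?_⟩
    simpa [Fin.cast] using (hf (Fin.cast length_ofFn.symm j)).symm

section

variable {α : Type*} {ℓ m : ℕ}

theorem isSubseq_zero_left (s : Fin 0 → α) (t : Fin m → α) : IsSubseq s t :=
  ⟨Fin.elim0, fun i => i.elim0, fun i => i.elim0⟩

theorem not_isSubseq_zero_right (s : Fin (ℓ + 1) → α) (t : Fin 0 → α) : ¬IsSubseq s t :=
  fun ⟨f, _, _⟩ => (f 0).elim0

variable {s : Fin (ℓ + 1) → α} {u : Fin m → α}

theorem isSubseq_cons_self_iff : IsSubseq s (Fin.cons (s 0) u) ↔ IsSubseq (Fin.tail s) u := by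
  rw [isSubseq_iff_sublist, isSubseq_iff_sublist, List.ofFn_cons, List.ofFn_succ,
    List.cons_sublist_cons]
  rfl

theorem isSubseq_cons_of_ne {a : α} (ha : a ≠ s 0) :
    IsSubseq s (Fin.cons a u) ↔ IsSubseq s u := by
  rw [isSubseq_iff_sublist, isSubseq_iff_sublist, List.ofFn_cons, List.ofFn_succ]
  exact ⟨List.Sublist.of_cons_of_ne ha.symm, List.Sublist.cons a⟩

end

theorem ncard_setOf_eq_sum_cons {β : Type*} [Fintype β] {m : ℕ} (P : (Fin (m + 1) → β) → Prop) :
    {t | P t}.ncard = ∑ a : β, {u : Fin m → β | P (Fin.cons a u)}.ncard := by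
  classical
  simp only [Set.ncard_eq_toFinset_card', Set.toFinset_ofPred, card_filter]
  rw [← (Fin.consEquiv fun _ => β).sum_comp, Fintype.sum_prod_type]
  rfl

theorem ncard_setOf_isSubseq_succ {k ℓ m : ℕ} (s : Fin (ℓ + 1) → Fin k) :
    {t : Fin (m + 1) → Fin k | IsSubseq s t}.ncard =
      {u : Fin m → Fin k | IsSubseq (Fin.tail s) u}.ncard
        + (k - 1) * {u : Fin m → Fin k | IsSubseq s u}.ncard := by
  have fiber_of_ne : ∀ a ∈ ({s 0}ᶜ : Finset (Fin k)),
      {u : Fin m → Fin k | IsSubseq s (Fin.cons a u)}.ncard = {u | IsSubseq s u}.ncard :=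
    fun a ha => congrArg Set.ncard (Set.ext fun u => isSubseq_cons_of_ne (by simpa using ha))
  rw [ncard_setOf_eq_sum_cons, Fintype.sum_eq_add_sum_compl (s 0), sum_congr rfl fiber_of_ne]
  simp [isSubseq_cons_self_iff, card_compl]

def superstringCount (k : ℕ) : ℕ → ℕ → ℕ
  | 0, m => k ^ m
  | _ + 1, 0 => 0
  | ℓ + 1, m + 1 => superstringCount k ℓ m + (k - 1) * superstringCount k (ℓ + 1) m

theorem ncard_setOf_isSubseq {k ℓ m : ℕ} (s : Fin ℓ → Fin k) :
    {t : Fin m → Fin k | IsSubseq s t}.ncard = superstringCount k ℓ m := by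
  induction m generalizing ℓ with
  | zero =>
    cases ℓ with
    | zero => simp [superstringCount, isSubseq_zero_left]
    | succ ℓ => simp [superstringCount, not_isSubseq_zero_right]
  | succ m ih =>
    cases ℓ with
    | zero => simp [superstringCount, isSubseq_zero_left]
    | succ ℓ => rw [ncard_setOf_isSubseq_succ, ih, ih, superstringCount]

theorem choose_succ_mul_pow_sub_succ_mul (x m ℓ : ℕ) :
    m.choose (ℓ + 1) * x ^ (m - (ℓ + 1)) * x = m.choose (ℓ + 1) * x ^ (m - ℓ) := by
  rcases le_or_gt (ℓ + 1) m with h | h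
  · rw [mul_assoc, ← pow_succ]
    congr 2
    omega
  · simp [Nat.choose_eq_zero_of_lt h]

theorem superstringCount_succ_succ_eq_mul_add (k ℓ m : ℕ) :
    superstringCount k (ℓ + 1) (m + 1) =
      k * superstringCount k (ℓ + 1) m + m.choose ℓ * (k - 1) ^ (m - ℓ) := by
  induction m generalizing ℓ with
  | zero => cases ℓ <;> simp [superstringCount]
  | succ m ih =>
    cases ℓ with
    | zero =>
      have unfold_succ :
          superstringCount k 1 (m + 1) = k ^ m + (k - 1) * superstringCount k 1 m := by
        rw [superstringCount, superstringCount]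
      rw [superstringCount.eq_3 k 0 (m + 1), superstringCount.eq_1, Nat.choose_zero_right,
        Nat.sub_zero]
      have peel := ih 0
      rw [Nat.choose_zero_right, one_mul, Nat.sub_zero] at peel
      linear_combination k * unfold_succ.symm + (k - 1) * peel
    | succ ℓ =>
      have unfold_succ : superstringCount k (ℓ + 2) (m + 1) =
          superstringCount k (ℓ + 1) m + (k - 1) * superstringCount k (ℓ + 2) m := by
        rw [superstringCount]
      rw [superstringCount, ih ℓ, Nat.choose_succ_succ', Nat.add_sub_add_right]
      linear_combination k * unfold_succ.symm + (k - 1) * ih (ℓ + 1) +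
        choose_succ_mul_pow_sub_succ_mul (k - 1) m ℓ

theorem superstringCount_succ_eq_sum (k ℓ m : ℕ) :
    superstringCount k (ℓ + 1) m =
      ∑ t ∈ Icc (ℓ + 1) m, (t - 1).choose ℓ * k ^ (m - t) * (k - 1) ^ (t - (ℓ + 1)) := by
  induction m with
  | zero => simp [superstringCount]
  | succ m ih =>
    rw [superstringCount_succ_succ_eq_mul_add, ih]
    rcases le_or_gt ℓ m with h | h
    · rw [sum_Icc_succ_top (by omega), mul_sum]
      congr 1
      · refine sum_congr rfl fun t ht => ?_
        rw [show m + 1 - t = m - t + 1 by grind, pow_succ]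
        ring
      · rw [Nat.add_sub_cancel, Nat.sub_self, Nat.add_sub_add_right, pow_zero, mul_one]
    · rw [Icc_eq_empty (by omega), Icc_eq_empty (by omega), Nat.choose_eq_zero_of_lt h]
      simp

theorem sum_Icc_choose_pred (ℓ m : ℕ) :
    ∑ t ∈ Icc (ℓ + 1) m, (t - 1).choose ℓ = m.choose (ℓ + 1) := by
  induction m with
  | zero => simp
  | succ m ih =>
    rcases le_or_gt ℓ m with h | h
    · rw [sum_Icc_succ_top (by omega), ih, Nat.choose_succ_succ', Nat.add_sub_cancel, add_comm]
    · simp [Nat.choose_eq_zero_of_lt, h]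

theorem sum_choose_mul_pow_le (k ℓ m : ℕ) :
    ∑ t ∈ Icc (ℓ + 1) m, (t - 1).choose ℓ * k ^ (m - t) * (k - 1) ^ (t - (ℓ + 1)) ≤
      k ^ (m - (ℓ + 1)) * m.choose (ℓ + 1) :=
  calc ∑ t ∈ Icc (ℓ + 1) m, (t - 1).choose ℓ * k ^ (m - t) * (k - 1) ^ (t - (ℓ + 1))
      ≤ ∑ t ∈ Icc (ℓ + 1) m, (t - 1).choose ℓ * k ^ (m - (ℓ + 1)) := by
        refine sum_le_sum fun t ht => ?_
        have ht' := mem_Icc.1 ht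
        calc (t - 1).choose ℓ * k ^ (m - t) * (k - 1) ^ (t - (ℓ + 1))
            ≤ (t - 1).choose ℓ * k ^ (m - t) * k ^ (t - (ℓ + 1)) := by gcongr; omega
          _ = (t - 1).choose ℓ * k ^ (m - (ℓ + 1)) := by
            rw [mul_assoc, ← pow_add, Nat.sub_add_sub_cancel ht'.2 ht'.1]
    _ = k ^ (m - (ℓ + 1)) * m.choose (ℓ + 1) := by rw [← sum_mul, sum_Icc_choose_pred, mul_comm]

theorem count_superstrings_general (k ℓ m : ℕ) (hℓ : 0 < ℓ)
    (s : Fin ℓ → Fin k) :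
    {s' : Fin m → Fin k | IsSubseq s s'}.ncard ≤
        ∑ t ∈ Finset.Icc ℓ m, (t - 1).choose (ℓ - 1) * k ^ (m - t) * (k - 1) ^ (t - ℓ) ∧
      ∑ t ∈ Finset.Icc ℓ m, (t - 1).choose (ℓ - 1) * k ^ (m - t) * (k - 1) ^ (t - ℓ) ≤
        k ^ (m - ℓ) * m.choose ℓ := by
  obtain ⟨ℓ, rfl⟩ := Nat.exists_eq_add_one_of_ne_zero hℓ.ne'
  rw [Nat.add_sub_cancel]
  exact ⟨(ncard_setOf_isSubseq s).trans_le (superstringCount_succ_eq_sum k ℓ m).le,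
    sum_choose_mul_pow_le k ℓ m⟩

/-- Let `k ≥ 2`, `1 ≤ ℓ ≤ m`, and fix `s ∈ [k]^ℓ`. The number of strings `s' ∈ [k]^m`
containing `s` as a subsequence is at most
`Σ_{t=ℓ}^{m} C(t-1, ℓ-1) k^{m-t} (k-1)^{t-ℓ}`, and this sum is at most
`k^{m-ℓ} C(m, ℓ)`. -/
theorem count_superstrings (k ℓ m : ℕ) (hk : 2 ≤ k) (hℓ : 0 < ℓ) (hℓm : ℓ ≤ m)
    (s : Fin ℓ → Fin k) :
    {s' : Fin m → Fin k | IsSubseq s s'}.ncard ≤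
        ∑ t ∈ Finset.Icc ℓ m, (t - 1).choose (ℓ - 1) * k ^ (m - t) * (k - 1) ^ (t - ℓ) ∧
      ∑ t ∈ Finset.Icc ℓ m, (t - 1).choose (ℓ - 1) * k ^ (m - t) * (k - 1) ^ (t - ℓ) ≤
        k ^ (m - ℓ) * m.choose ℓ :=
  count_superstrings_general k ℓ m hℓ s
end
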